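/- (Sharpness of Theorem 2) Fix n ≥ 2 and let 𝔖_n = {A ∈ Ω_n : A has a single eigenvalue of multiplicity n}. For every d with 1 ≤ d ≤ n, define G^{(d)}(X) = diag(M_d(X), (tr(X)/n)·I_{n−d}), where M_d(X) is the d×d matrix with 1's on the subdiagonal, tr(X)/n in the (1,d) corner, and zeros elsewhere (and M_1(X) = [tr(X)/n]). Then G^{(d)} : Ω_n → Ω_n is holomorphic, the degree of the minimal polynomial of G^{(d)}(0) is d, and for every A ∈ 𝔖_n: r(G^{(d)}(A)) = (r(A)^{1/d} + r(G^{(d)}(0))) / (1 + r(G^{(d)}(0))·r(A)^{1/d}). -/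

import Mathlib

attribute [local instance] Matrix.normedAddCommGroup Matrix.normedSpace

/-- The spectral radius of a complex `n × n` matrix. -/
noncomputable def sRad {n : ℕ} (A : Matrix (Fin n) (Fin n) ℂ) : ℝ :=
  sSup ((fun μ => ‖μ‖) '' spectrum ℂ A)

/-- The spectral unit ball `Ω_n`. -/
def specBall (n : ℕ) : Set (Matrix (Fin n) (Fin n) ℂ) := {W | sRad W < 1}

/-- The `n × n` block-diagonal matrix `diag(M_d(η), η·I_{n-d})`, where `M_d(η)` is the
`d × d` matrix with `1`'s on the subdiagonal and `η` in the `(1,d)` corner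
(and `M_1(η) = [η]`). -/
def Fmat (n d : ℕ) (η : ℂ) : Matrix (Fin n) (Fin n) ℂ :=
  Matrix.of fun i j =>
    if (i : ℕ) < d ∧ (j : ℕ) < d then
      (if (i : ℕ) = (j : ℕ) + 1 then 1 else if (i : ℕ) = 0 ∧ (j : ℕ) = d - 1 then η else 0)
    else if i = j then η else 0


/-!
Write `η = tr X / n`. On the first `d` coordinates `Fmat n d η` is a cyclic weighted shift whose
`d`-th power is `η`, and on the remaining ones it is multiplication by `η`. Computing eigenvectors,
its eigenvalues are the `d`-th roots of `η`, together with `η` itself when `d < n`; for `‖η‖ ≤ 1`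
the latter are no larger, so the spectral radius is `‖η‖ ^ (1 / d)`. Since `‖tr X / n‖ ≤ r(X)`,
this makes the map (affine in `tr X`) a holomorphic self-map of `Ω_n`. At `η = 0` the matrix is a
nilpotent shift of index exactly `d`, so its minimal polynomial is `X ^ d` and its spectral radius
vanishes. Finally, a matrix whose characteristic polynomial is `(X - λ) ^ n` has `tr A / n = λ`
and `r(A) = ‖λ‖`, so both sides of the identity equal `‖λ‖ ^ (1 / d)`.
-/

open Matrix Polynomial

theorem Matrix.mem_spectrum_iff_exists_mulVec_eq_smul {K ι : Type*} [Field K] [Fintype ι]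
    [DecidableEq ι] (A : Matrix ι ι K) (μ : K) :
    μ ∈ spectrum K A ↔ ∃ v ≠ 0, A *ᵥ v = μ • v := by
  rw [spectrum.mem_iff, Algebra.algebraMap_eq_smul_one, isUnit_iff_isUnit_det,
    isUnit_iff_ne_zero, not_not, ← exists_mulVec_eq_zero_iff]
  simp only [sub_mulVec, smul_mulVec, one_mulVec, sub_eq_zero, eq_comm]

theorem minpoly_eq_X_pow_of_pow_eq_zero {K A : Type*} [Field K] [Ring A] [Algebra K A] {a : A}
    {d : ℕ} (hd : a ^ d = 0) (hd' : a ^ (d - 1) ≠ 0) : minpoly K a = X ^ d := by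
  have hint : IsIntegral K a := ⟨X ^ d, monic_X_pow d, by simp [hd]⟩
  obtain ⟨i, hid, hassoc⟩ := (dvd_prime_pow prime_X d).1 (minpoly.dvd K a (by simp [hd]))
  have hmin : minpoly K a = X ^ i :=
    eq_of_monic_of_associated (minpoly.monic hint) (monic_X_pow i) hassoc
  have hi : a ^ i = 0 := by simpa [hmin] using minpoly.aeval K a
  have hdi : d ≤ i := by
    by_contra! hlt
    exact hd' (pow_eq_zero_of_le (by omega) hi)
  rw [hmin, le_antisymm hid hdi]

section SingleEigenvalue

variable {K ι : Type*} [Field K] [Fintype ι] [DecidableEq ι] {A : Matrix ι ι K} {c : K} {m : ℕ}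

theorem Matrix.spectrum_eq_singleton_of_charpoly_eq (hm : m ≠ 0)
    (h : A.charpoly = (X - C c) ^ m) : spectrum K A = {c} := by
  ext μ
  simp [mem_spectrum_iff_isRoot_charpoly, h, hm, sub_eq_zero]

theorem Matrix.trace_eq_of_charpoly_eq (h : A.charpoly = (X - C c) ^ m) :
    A.trace = m * c := by
  have hsplit : A.charpoly.Splits := h ▸ (Splits.X_sub_C c).pow m
  rw [trace_eq_sum_roots_charpoly_of_splits hsplit, h, roots_pow, roots_X_sub_C,
    Multiset.nsmul_singleton, Multiset.sum_replicate, nsmul_eq_mul]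

end SingleEigenvalue

section SpectralRadius

variable {n : ℕ}

theorem sRad_nonneg (A : Matrix (Fin n) (Fin n) ℂ) : 0 ≤ sRad A :=
  Real.sSup_nonneg (Set.forall_mem_image.2 fun _ _ => norm_nonneg _)

theorem norm_le_sRad {A : Matrix (Fin n) (Fin n) ℂ} {μ : ℂ} (hμ : μ ∈ spectrum ℂ A) :
    ‖μ‖ ≤ sRad A :=
  le_csSup ((A.finite_spectrum.image _).bddAbove) ⟨μ, hμ, rfl⟩

theorem sRad_eq_norm_of_forall_norm_le {A : Matrix (Fin n) (Fin n) ℂ} {μ : ℂ}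
    (hμ : μ ∈ spectrum ℂ A) (hmax : ∀ ν ∈ spectrum ℂ A, ‖ν‖ ≤ ‖μ‖) : sRad A = ‖μ‖ :=
  le_antisymm (csSup_le ⟨_, μ, hμ, rfl⟩ (Set.forall_mem_image.2 hmax)) (norm_le_sRad hμ)

theorem norm_trace_le_mul_sRad (A : Matrix (Fin n) (Fin n) ℂ) : ‖A.trace‖ ≤ n * sRad A := by
  have hcard : A.charpoly.roots.card = n := by
    rw [← (IsAlgClosed.splits A.charpoly).natDegree_eq_card_roots, charpoly_natDegree_eq_dim,
      Fintype.card_fin]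
  have hroots : ∀ x ∈ A.charpoly.roots.map (‖·‖), x ≤ sRad A := by
    simp only [Multiset.mem_map, mem_roots', forall_exists_index, and_imp]
    rintro _ μ - hμ rfl
    exact norm_le_sRad (mem_spectrum_iff_isRoot_charpoly.2 hμ)
  calc ‖A.trace‖ = ‖A.charpoly.roots.sum‖ := by rw [trace_eq_sum_roots_charpoly]
    _ ≤ (A.charpoly.roots.map (‖·‖)).sum := norm_multiset_sum_le _
    _ ≤ n * sRad A := by
      simpa [hcard] using Multiset.sum_le_card_nsmul _ _ hroots

theorem norm_trace_div_le_sRad (A : Matrix (Fin n) (Fin n) ℂ) : ‖A.trace / n‖ ≤ sRad A := by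
  rcases n.eq_zero_or_pos with rfl | hn
  · simpa using sRad_nonneg A
  rw [norm_div, Complex.norm_natCast, div_le_iff₀ (by positivity), mul_comm]
  exact norm_trace_le_mul_sRad A

end SpectralRadius

section Fmat

theorem Fmat_eq_add_smul (n d : ℕ) (η : ℂ) :
    Fmat n d η = Fmat n d 0 + η • (Fmat n d 1 - Fmat n d 0) := by
  ext i j
  simp only [Fmat, of_apply, Matrix.add_apply, Matrix.smul_apply, Matrix.sub_apply, smul_eq_mul]
  split_ifs <;> ring

theorem differentiable_Fmat (n d : ℕ) : Differentiable ℂ (Fmat n d) := by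
  rw [funext (Fmat_eq_add_smul n d)]
  exact (differentiable_id.smul_const _).const_add _

variable {n d : ℕ}

theorem Fmat_mulVec_of_le (η : ℂ) (v : Fin n → ℂ) {i : Fin n} (hi : d ≤ i) :
    (Fmat n d η *ᵥ v) i = η * v i := by
  rw [mulVec, dotProduct, Fintype.sum_eq_single i fun k hk => by
    simp [Fmat, hk.symm, show ¬(i : ℕ) < d by omega]]
  simp [Fmat, show ¬(i : ℕ) < d by omega]

theorem Fmat_mulVec_of_val_eq_succ (η : ℂ) (v : Fin n → ℂ) {i j : Fin n}
    (hij : (i : ℕ) = j + 1) (hi : (i : ℕ) < d) : (Fmat n d η *ᵥ v) i = v j := by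
  rw [mulVec, dotProduct, Fintype.sum_eq_single j fun k hk => by
    have : (k : ℕ) ≠ j := Fin.val_ne_of_ne hk
    simp only [Fmat, of_apply, Fin.ext_iff]; split_ifs <;> first | (exfalso; omega) | simp]
  simp only [Fmat, of_apply, Fin.ext_iff]; split_ifs <;> first | (exfalso; omega) | simp

theorem Fmat_mulVec_of_val_eq_zero (η : ℂ) (v : Fin n → ℂ) {i j : Fin n}
    (hi : (i : ℕ) = 0) (hj : (j : ℕ) + 1 = d) : (Fmat n d η *ᵥ v) i = η * v j := by
  rw [mulVec, dotProduct, Fintype.sum_eq_single j fun k hk => by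
    have : (k : ℕ) ≠ j := Fin.val_ne_of_ne hk
    simp only [Fmat, of_apply, Fin.ext_iff]; split_ifs <;> first | (exfalso; omega) | simp]
  simp only [Fmat, of_apply, Fin.ext_iff]; split_ifs <;> first | (exfalso; omega) | simp

theorem Fmat_eigenvector_apply {η μ : ℂ} {v : Fin n → ℂ} (hv : Fmat n d η *ᵥ v = μ • v)
    {last : Fin n} (hlast : (last : ℕ) + 1 = d) (m : ℕ) {i : Fin n} (hi : (i : ℕ) + m + 1 = d) :
    v i = μ ^ m * v last := by
  induction m generalizing i with
  | zero => rw [pow_zero, one_mul, Fin.ext (by omega : (i : ℕ) = last)]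
  | succ m ih =>
    let i' : Fin n := ⟨i + 1, by omega⟩
    calc v i = (Fmat n d η *ᵥ v) i' :=
          (Fmat_mulVec_of_val_eq_succ η v rfl (show (i : ℕ) + 1 < d by omega)).symm
      _ = μ * v i' := congrFun hv i'
      _ = μ ^ (m + 1) * v last := by
          rw [ih (i := i') (show (i : ℕ) + 1 + m + 1 = d by omega)]; ring

theorem pow_eq_or_eq_of_mem_spectrum_Fmat (hd1 : 1 ≤ d) (hdn : d ≤ n) {η μ : ℂ}
    (hμ : μ ∈ spectrum ℂ (Fmat n d η)) : μ ^ d = η ∨ μ = η := by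
  obtain ⟨v, hv0, hv⟩ := (mem_spectrum_iff_exists_mulVec_eq_smul _ _).1 hμ
  by_cases htail : ∃ i : Fin n, d ≤ i ∧ v i ≠ 0
  · obtain ⟨i, hi, hvi⟩ := htail
    have : μ * v i = η * v i := (congrFun hv i).symm.trans (Fmat_mulVec_of_le η v hi)
    exact .inr (mul_right_cancel₀ hvi this)
  push Not at htail
  obtain ⟨last, hlast⟩ : ∃ last : Fin n, (last : ℕ) + 1 = d := ⟨⟨d - 1, by omega⟩, by simp; omega⟩
  let first : Fin n := ⟨0, by omega⟩
  have hvlast : v last ≠ 0 := fun h => hv0 <| funext fun i => by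
    by_cases hi : (i : ℕ) < d
    · rw [Fmat_eigenvector_apply hv hlast (d - 1 - i) (by omega), h, mul_zero, Pi.zero_apply]
    · exact htail i (by omega)
  have : μ ^ d * v last = η * v last :=
    calc μ ^ d * v last = μ * (μ ^ (d - 1) * v last) := by
          rw [← mul_assoc, ← pow_succ', Nat.sub_add_cancel hd1]
      _ = μ * v first := by
        rw [Fmat_eigenvector_apply hv hlast (d - 1) (i := first)
          (show 0 + (d - 1) + 1 = d by omega)]
      _ = (Fmat n d η *ᵥ v) first := (congrFun hv first).symm
      _ = η * v last := Fmat_mulVec_of_val_eq_zero η v rfl hlast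
  exact .inl (mul_right_cancel₀ hvlast this)

theorem mem_spectrum_Fmat_of_pow_eq (hd1 : 1 ≤ d) (hdn : d ≤ n) {η μ : ℂ} (hμ : μ ^ d = η) :
    μ ∈ spectrum ℂ (Fmat n d η) := by
  obtain ⟨last, hlast⟩ : ∃ last : Fin n, (last : ℕ) + 1 = d := ⟨⟨d - 1, by omega⟩, by simp; omega⟩
  refine (mem_spectrum_iff_exists_mulVec_eq_smul _ _).2
    ⟨fun i => if (i : ℕ) < d then μ ^ (d - 1 - i) else 0, fun h => ?_, funext fun i => ?_⟩
  · have := congrFun h last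
    rw [if_pos (by omega), show d - 1 - (last : ℕ) = 0 by omega, pow_zero] at this
    exact one_ne_zero this
  simp only [Pi.smul_apply, smul_eq_mul]
  by_cases hid : (i : ℕ) < d
  · rcases Nat.eq_zero_or_pos (i : ℕ) with hi0 | hi0
    · rw [Fmat_mulVec_of_val_eq_zero η _ hi0 hlast, if_pos (by omega), if_pos hid, hi0,
        show d - 1 - (last : ℕ) = 0 by omega, pow_zero, mul_one, ← hμ, ← pow_succ', Nat.sub_zero,
        Nat.sub_add_cancel hd1]
    · rw [Fmat_mulVec_of_val_eq_succ η _ (j := ⟨i - 1, by omega⟩) (by simp; omega) hid,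
        if_pos (by simp; omega), if_pos hid, ← pow_succ']
      congr 1; simp; omega
  · rw [Fmat_mulVec_of_le η _ (not_lt.1 hid), if_neg hid, mul_zero, mul_zero]

theorem sRad_Fmat (hd1 : 1 ≤ d) (hdn : d ≤ n) {η : ℂ} (hη : ‖η‖ ≤ 1) :
    sRad (Fmat n d η) = ‖η‖ ^ ((1 : ℝ) / d) := by
  obtain ⟨μ, hμ⟩ := IsAlgClosed.exists_pow_nat_eq η (by omega : 0 < d)
  have hnorm : ‖η‖ = ‖μ‖ ^ d := by rw [← hμ, norm_pow]
  have hμ1 : ‖μ‖ ≤ 1 := (pow_le_one_iff_of_nonneg (norm_nonneg μ) (by omega)).1 (hnorm ▸ hη)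
  rw [sRad_eq_norm_of_forall_norm_le (mem_spectrum_Fmat_of_pow_eq hd1 hdn hμ), hnorm, one_div,
    Real.pow_rpow_inv_natCast (norm_nonneg μ) (by omega)]
  intro ν hν
  rcases pow_eq_or_eq_of_mem_spectrum_Fmat hd1 hdn hν with hν | rfl
  · refine ((pow_left_inj₀ (norm_nonneg ν) (norm_nonneg μ) (by omega : d ≠ 0)).1 ?_).le
    simp only [← norm_pow, hν, hμ]
  · exact hnorm ▸ pow_le_of_le_one (norm_nonneg μ) hμ1 (by omega)

theorem Fmat_zero_apply (i j : Fin n) :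
    Fmat n d 0 i j = if (i : ℕ) = j + 1 ∧ (i : ℕ) < d then 1 else 0 := by
  simp only [Fmat, of_apply, Fin.ext_iff]
  split_ifs <;> first | (exfalso; omega) | simp_all

theorem Fmat_zero_pow_succ_apply (k : ℕ) (i j : Fin n) :
    (Fmat n d 0 ^ (k + 1)) i j = if (i : ℕ) = j + (k + 1) ∧ (i : ℕ) < d then 1 else 0 := by
  induction k generalizing i with
  | zero => rw [zero_add, pow_one, Fmat_zero_apply]
  | succ k ih =>
    rw [pow_succ', mul_apply]
    by_cases hi : 0 < (i : ℕ) ∧ (i : ℕ) < d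
    · rw [Fintype.sum_eq_single ⟨i - 1, by omega⟩ fun b hb => by
        have : (b : ℕ) ≠ i - 1 := fun h => hb (Fin.ext h)
        simp only [Fmat_zero_apply, ih]; split_ifs <;> first | (exfalso; omega) | simp]
      simp only [Fmat_zero_apply, ih]; split_ifs <;> first | (exfalso; omega) | simp
    · rw [Finset.sum_eq_zero fun b _ => by
        simp only [Fmat_zero_apply, ih]; split_ifs <;> first | (exfalso; omega) | simp]
      rw [if_neg (by omega)]

theorem Fmat_zero_pow_self (hd1 : 1 ≤ d) : Fmat n d 0 ^ d = 0 := by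
  obtain ⟨k, rfl⟩ := Nat.exists_eq_add_of_le' hd1
  ext i j
  rw [Fmat_zero_pow_succ_apply, if_neg (by omega), Matrix.zero_apply]

theorem Fmat_zero_pow_pred_ne_zero (hd1 : 1 ≤ d) (hdn : d ≤ n) : Fmat n d 0 ^ (d - 1) ≠ 0 := by
  intro h
  rcases Nat.eq_or_lt_of_le hd1 with rfl | hd
  · simpa using congrFun (congrFun h ⟨0, by omega⟩) ⟨0, by omega⟩
  obtain ⟨k, hk⟩ : ∃ k, d - 1 = k + 1 := ⟨d - 2, by omega⟩
  rw [hk] at h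
  have hentry := congrFun (congrFun h ⟨k + 1, by omega⟩) ⟨0, by omega⟩
  rw [Fmat_zero_pow_succ_apply, if_pos (by simp; omega)] at hentry
  exact one_ne_zero hentry

theorem natDegree_minpoly_Fmat_zero (hd1 : 1 ≤ d) (hdn : d ≤ n) :
    (minpoly ℂ (Fmat n d 0)).natDegree = d := by
  rw [minpoly_eq_X_pow_of_pow_eq_zero (Fmat_zero_pow_self hd1)
    (Fmat_zero_pow_pred_ne_zero hd1 hdn), natDegree_X_pow]

end Fmat

theorem stmt19_general (n d : ℕ) (hd1 : 1 ≤ d) (hdn : d ≤ n) :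
    (DifferentiableOn ℂ (fun X : Matrix (Fin n) (Fin n) ℂ => Fmat n d (X.trace / n))
      (specBall n)) ∧
    (Set.MapsTo (fun X : Matrix (Fin n) (Fin n) ℂ => Fmat n d (X.trace / n))
      (specBall n) (specBall n)) ∧
    (minpoly ℂ (Fmat n d ((0 : Matrix (Fin n) (Fin n) ℂ).trace / n))).natDegree = d ∧
    ∀ A ∈ specBall n, (∃ lam : ℂ, A.charpoly = (Polynomial.X - Polynomial.C lam) ^ n) →
      sRad (Fmat n d (A.trace / n)) =
        (sRad A ^ ((1 : ℝ) / d) + sRad (Fmat n d ((0 : Matrix (Fin n) (Fin n) ℂ).trace / n))) /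
          (1 + sRad (Fmat n d ((0 : Matrix (Fin n) (Fin n) ℂ).trace / n)) *
            sRad A ^ ((1 : ℝ) / d)) := by
  have htrace : Differentiable ℂ fun X : Matrix (Fin n) (Fin n) ℂ => X.trace / n := by
    simp only [div_eq_mul_inv]
    exact (traceLinearMap (Fin n) ℂ ℂ).toContinuousLinearMap.differentiable.mul_const _
  have hsRad0 : sRad (Fmat n d 0) = 0 := by
    rw [sRad_Fmat hd1 hdn (by simp), norm_zero, Real.zero_rpow (by positivity)]
  simp only [trace_zero, zero_div, hsRad0, add_zero, zero_mul, div_one]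
  refine ⟨((differentiable_Fmat n d).comp htrace).differentiableOn, fun X hX => ?_,
    natDegree_minpoly_Fmat_zero hd1 hdn, ?_⟩
  · have hη := (norm_trace_div_le_sRad X).trans_lt hX
    show sRad _ < 1
    rw [sRad_Fmat hd1 hdn hη.le]
    exact Real.rpow_lt_one (norm_nonneg _) hη (by positivity)
  · rintro A hA ⟨c, hc⟩
    have hsA : sRad A = ‖c‖ := by
      rw [sRad, spectrum_eq_singleton_of_charpoly_eq (by omega) hc, Set.image_singleton,
        csSup_singleton]
    have htr : A.trace / n = c := by
      rw [trace_eq_of_charpoly_eq hc, mul_div_cancel_left₀ _ (by norm_cast; omega)]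
    have hc1 : ‖c‖ < 1 := hsA ▸ hA
    rw [htr, hsA, sRad_Fmat hd1 hdn hc1.le]

/-- (Sharpness of Theorem 2) For `n ≥ 2` and `1 ≤ d ≤ n`, the map
`G⁽ᵈ⁾(X) = diag(M_d(X), (tr X / n)·I_{n-d})` is a holomorphic self-map of `Ω_n`, the
degree of the minimal polynomial of `G⁽ᵈ⁾(0)` is `d`, and equality holds in the spectral
Schwarz–Pick inequality at every `A ∈ Ω_n` having a single eigenvalue of
multiplicity `n`. -/
theorem stmt19 (n d : ℕ) (hn : 2 ≤ n) (hd1 : 1 ≤ d) (hdn : d ≤ n) :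
    (DifferentiableOn ℂ (fun X : Matrix (Fin n) (Fin n) ℂ => Fmat n d (X.trace / n))
      (specBall n)) ∧
    (Set.MapsTo (fun X : Matrix (Fin n) (Fin n) ℂ => Fmat n d (X.trace / n))
      (specBall n) (specBall n)) ∧
    (minpoly ℂ (Fmat n d ((0 : Matrix (Fin n) (Fin n) ℂ).trace / n))).natDegree = d ∧
    ∀ A ∈ specBall n, (∃ lam : ℂ, A.charpoly = (Polynomial.X - Polynomial.C lam) ^ n) →
      sRad (Fmat n d (A.trace / n)) =
        (sRad A ^ ((1 : ℝ) / d) + sRad (Fmat n d ((0 : Matrix (Fin n) (Fin n) ℂ).trace / n))) /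
          (1 + sRad (Fmat n d ((0 : Matrix (Fin n) (Fin n) ℂ).trace / n)) *
            sRad A ^ ((1 : ℝ) / d)) :=
  stmt19_general n d hd1 hdn
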